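/- arXiv:1503.01027 — 2 statements merged into one kernel-verified Lean document; each statement's English description precedes it below -/
import Mathlib

section
/- Let h : [0,T] → L(ℝ^r,ℝ^d) be continuous and bounded, and let (u_n) be a sequence in L²([0,T];ℝ^r) with ‖u_n‖²_{L²} ≤ 2γ for all n, converging weakly in L² to u with ‖u‖²_{L²} ≤ 2γ. Define Γ_n(t) = ∫₀ᵗ h(s)(u_n(s) − u(s)) ds. Then Γ_n → 0 uniformly on [0,T]. -/
open MeasureTheory intervalIntegral Filter Topology
open scoped RealInnerProductSpace Interval

/-!
The primitives `Γₙ t = ∫₀ᵗ h (uₙ - u)` are uniformly ½-Hölder on `[0, T]`: by Cauchy–Schwarz,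
`‖Γₙ x - Γₙ y‖ ≤ M ‖uₙ - u‖₂ √|x - y|`, and the `L²` norms of `uₙ - u` are bounded. So the family
is equicontinuous on the compact interval, where pointwise convergence is then uniform. Pointwise,
`⟪e, Γₙ t⟫ = ∫ ⟪uₙ - u, 1_{(0,t]} h* e⟫ → 0` by weak convergence, and in finite dimension this
forces `Γₙ t → 0`.
-/

section Equicontinuity

variable {ι X α : Type*}

theorem IsCompact.tendstoUniformlyOn_of_equicontinuousOn [TopologicalSpace X] [UniformSpace α]
    {F : ι → X → α} {f : X → α} {p : Filter ι} {K : Set X} (hK : IsCompact K)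
    (hF : EquicontinuousOn F K) (hlim : ∀ x ∈ K, Tendsto (F · x) p (𝓝 (f x))) :
    TendstoUniformlyOn F f p K := by
  have : CompactSpace K := isCompact_iff_compactSpace.mp hK
  rw [tendstoUniformlyOn_iff_tendstoUniformly_comp_coe]
  exact UniformFun.tendsto_iff_tendstoUniformly.mp <|
    ((equicontinuous_restrict_iff F).mpr hF).tendsto_uniformFun_iff_pi _ _ |>.mpr <|
      tendsto_pi_nhds.mpr fun x => hlim x x.2

theorem Metric.equicontinuousOn_of_continuity_modulus [PseudoMetricSpace X] [PseudoMetricSpace α]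
    {K : Set X} (b : ℝ → ℝ) (b_lim : Tendsto b (𝓝 0) (𝓝 0)) (F : ι → X → α)
    (H : ∀ x ∈ K, ∀ y ∈ K, ∀ i, dist (F i x) (F i y) ≤ b (dist x y)) : EquicontinuousOn F K :=
  (equicontinuous_restrict_iff F).mp <|
    Metric.equicontinuous_of_continuity_modulus b b_lim _ fun x y i => H x x.2 y y.2 i

end Equicontinuity

theorem tendsto_zero_of_forall_inner_tendsto_zero {ι E : Type*} [NormedAddCommGroup E]
    [InnerProductSpace ℝ E] [FiniteDimensional ℝ E] {l : Filter ι} {x : ι → E}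
    (h : ∀ e, Tendsto (fun i => ⟪e, x i⟫) l (𝓝 0)) : Tendsto x l (𝓝 0) := by
  let b := stdOrthonormalBasis ℝ E
  simpa [b.sum_repr'] using tendsto_finsetSum Finset.univ fun j _ => (h (b j)).smul_const (b j)

section L2

variable {α E F : Type*} [MeasurableSpace α] {μ : Measure α}
  [NormedAddCommGroup E] [NormedAddCommGroup F]

theorem integral_norm_le_sqrt_mul_sqrt [IsFiniteMeasure μ] {f : α → E} (hf : MemLp f 2 μ) :
    ∫ x, ‖f x‖ ∂μ ≤ √(μ.real Set.univ) * √(∫ x, ‖f x‖ ^ 2 ∂μ) := by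
  have := integral_mul_le_Lp_mul_Lq_of_nonneg (μ := μ) Real.HolderConjugate.two_two
    (ae_of_all _ fun x => norm_nonneg (f x)) (ae_of_all _ fun _ => zero_le_one)
    (by simpa using hf.norm) (by simpa using memLp_const (1 : ℝ))
  simp only [mul_one, Real.one_rpow, MeasureTheory.integral_const, smul_eq_mul] at this
  simpa [Real.sqrt_eq_rpow, Real.rpow_two, mul_comm] using this

theorem integral_norm_sub_sq_le {f g : α → E} (hf : MemLp f 2 μ) (hg : MemLp g 2 μ) :
    ∫ x, ‖f x - g x‖ ^ 2 ∂μ ≤ 2 * ∫ x, ‖f x‖ ^ 2 ∂μ + 2 * ∫ x, ‖g x‖ ^ 2 ∂μ := by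
  have hf2 := hf.norm.integrable_sq
  have hg2 := hg.norm.integrable_sq
  rw [← MeasureTheory.integral_const_mul, ← MeasureTheory.integral_const_mul,
    ← integral_add (hf2.const_mul 2) (hg2.const_mul 2)]
  refine integral_mono (hf.sub hg).norm.integrable_sq ((hf2.const_mul 2).add (hg2.const_mul 2))
    fun x => ?_
  nlinarith [norm_sub_le (f x) (g x), sq_nonneg (‖f x‖ - ‖g x‖), norm_nonneg (f x - g x)]

variable [NormedSpace ℝ E] [NormedSpace ℝ F]

theorem norm_integral_clm_apply_le [IsFiniteMeasure μ] {h : α → E →L[ℝ] F} {f : α → E}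
    {M B : ℝ} (hM : ∀ᵐ x ∂μ, ‖h x‖ ≤ M) (hf : MemLp f 2 μ)
    (hB : ∫ x, ‖f x‖ ^ 2 ∂μ ≤ B) :
    ‖∫ x, h x (f x) ∂μ‖ ≤ M * √B * √(μ.real Set.univ) := by
  rcases eq_zero_or_neZero μ with rfl | _
  · simp
  obtain ⟨x, hx⟩ := hM.exists
  have hM0 : 0 ≤ M := (norm_nonneg _).trans hx
  calc ‖∫ x, h x (f x) ∂μ‖ ≤ ∫ x, M * ‖f x‖ ∂μ :=
        norm_integral_le_of_norm_le ((hf.integrable one_le_two).norm.const_mul M)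
          (hM.mono fun x hx => (h x).le_of_opNorm_le hx _)
    _ = M * ∫ x, ‖f x‖ ∂μ := MeasureTheory.integral_const_mul _ _
    _ ≤ M * (√(μ.real Set.univ) * √B) := by
        gcongr
        exact (integral_norm_le_sqrt_mul_sqrt hf).trans (by gcongr)
    _ = M * √B * √(μ.real Set.univ) := by ring

theorem norm_intervalIntegral_clm_apply_le {h : ℝ → E →L[ℝ] F} {f : ℝ → E} {K : Set ℝ}
    {M B a b : ℝ} (hM : ∀ t ∈ K, ‖h t‖ ≤ M) (hf : MemLp f 2 (volume.restrict K))
    (hB : ∫ t in K, ‖f t‖ ^ 2 ≤ B) (hab : Ι a b ⊆ K) :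
    ‖∫ t in a..b, h t (f t)‖ ≤ M * √B * √|b - a| := by
  have : IsFiniteMeasure (volume.restrict (Ι a b)) := isFiniteMeasure_restrict.2 (by simp)
  have hBab : ∫ t in Ι a b, ‖f t‖ ^ 2 ≤ B :=
    (setIntegral_mono_set hf.norm.integrable_sq (ae_of_all _ fun _ => by positivity)
      hab.eventuallyLE).trans hB
  rw [norm_integral_eq_norm_integral_uIoc]
  simpa [Measure.real, Real.volume_uIoc] using norm_integral_clm_apply_le
    (ae_restrict_of_forall_mem measurableSet_uIoc fun t ht => hM t (hab ht))
    (hf.mono_measure (Measure.restrict_mono hab le_rfl)) hBab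

theorem dist_intervalIntegral_clm_apply_le {h : ℝ → E →L[ℝ] F} {f : ℝ → E} {a b M B : ℝ}
    (hh : ContinuousOn h (Set.Icc a b)) (hM : ∀ t ∈ Set.Icc a b, ‖h t‖ ≤ M)
    (hf : MemLp f 2 (volume.restrict (Set.Icc a b))) (hB : ∫ t in Set.Icc a b, ‖f t‖ ^ 2 ≤ B)
    {x y : ℝ} (hx : x ∈ Set.Icc a b) (hy : y ∈ Set.Icc a b) :
    dist (∫ t in a..x, h t (f t)) (∫ t in a..y, h t (f t)) ≤ M * √B * √(dist x y) := by
  have hint : IntegrableOn (fun t => h t (f t)) (Set.Icc a b) :=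
    (ContinuousLinearMap.id ℝ (E →L[ℝ] F)).integrable_of_bilin_of_bdd_left M
      (hh.aestronglyMeasurable measurableSet_Icc) (ae_restrict_of_forall_mem measurableSet_Icc hM)
      (hf.integrable one_le_two)
  have ha : a ∈ Set.Icc a b := Set.left_mem_Icc.2 (hx.1.trans hx.2)
  rw [dist_eq_norm, integral_interval_sub_left
    (hint.mono_set (Set.uIcc_subset_Icc ha hx)).intervalIntegrable
    (hint.mono_set (Set.uIcc_subset_Icc ha hy)).intervalIntegrable, Real.dist_eq]
  exact norm_intervalIntegral_clm_apply_le hM hf hB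
    (Set.uIoc_subset_uIcc.trans (Set.uIcc_subset_Icc hy hx))

end L2

section WeakL2

variable {ι α E F : Type*} [MeasurableSpace α] {μ : Measure α}
  [NormedAddCommGroup E] [InnerProductSpace ℝ E] [NormedAddCommGroup F] [InnerProductSpace ℝ F]

def TendstoWeaklyInL2 (μ : Measure α) (u : ι → α → E) (l : Filter ι) (uLim : α → E) : Prop :=
  ∀ v : α → E, MemLp v 2 μ →
    Tendsto (fun i => ∫ x, ⟪u i x, v x⟫ ∂μ) l (𝓝 (∫ x, ⟪uLim x, v x⟫ ∂μ))

variable {u : ι → α → E} {uLim : α → E} {l : Filter ι}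

theorem TendstoWeaklyInL2.restrict (hu : TendstoWeaklyInL2 μ u l uLim) {s : Set α}
    (hs : MeasurableSet s) : TendstoWeaklyInL2 (μ.restrict s) u l uLim := by
  intro v hv
  have hind : ∀ w : α → E, ∫ x, ⟪w x, s.indicator v x⟫ ∂μ = ∫ x in s, ⟪w x, v x⟫ ∂μ := by
    intro w
    rw [← MeasureTheory.integral_indicator hs]
    congr with x
    by_cases hx : x ∈ s <;> simp [hx]
  simpa only [hind] using hu (s.indicator v) ((memLp_indicator_iff_restrict hs).2 hv)

theorem TendstoWeaklyInL2.tendsto_integral_clm_apply_sub [IsFiniteMeasure μ] [CompleteSpace E]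
    [FiniteDimensional ℝ F] (hweak : TendstoWeaklyInL2 μ u l uLim) (hu : ∀ i, MemLp (u i) 2 μ)
    (huLim : MemLp uLim 2 μ) {h : α → E →L[ℝ] F} {M : ℝ} (hh : AEStronglyMeasurable h μ)
    (hM : ∀ᵐ x ∂μ, ‖h x‖ ≤ M) :
    Tendsto (fun i => ∫ x, h x (u i x - uLim x) ∂μ) l (𝓝 0) := by
  refine tendsto_zero_of_forall_inner_tendsto_zero fun e => ?_
  set v : α → E := fun x => ContinuousLinearMap.adjoint (h x) e
  have hv : MemLp v 2 μ := by
    refine MemLp.of_bound ?_ (M * ‖e‖) (hM.mono fun x hx => ?_)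
    · exact (ContinuousLinearMap.adjoint.continuous.comp_aestronglyMeasurable hh)
        |>.apply_continuousLinearMap e
    · exact ((ContinuousLinearMap.adjoint (h x)).le_opNorm e).trans
        (by rw [LinearIsometryEquiv.norm_map]; gcongr)
  have hint : ∀ w : α → E, MemLp w 2 μ → Integrable (fun x => ⟪w x, v x⟫) μ := fun w hw =>
    memLp_one_iff_integrable.1 <| (innerSL ℝ).memLp_of_bilin 1 hw hv
  have hinner : ∀ i, ⟪e, ∫ x, h x (u i x - uLim x) ∂μ⟫
      = ∫ x, ⟪u i x, v x⟫ ∂μ - ∫ x, ⟪uLim x, v x⟫ ∂μ := by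
    intro i
    have : Integrable (fun x => h x (u i x - uLim x)) μ :=
      (ContinuousLinearMap.id ℝ _).integrable_of_bilin_of_bdd_left M hh hM
        (((hu i).sub huLim).integrable one_le_two)
    rw [← integral_inner this, ← integral_sub (hint _ (hu i)) (hint _ huLim)]
    congr with x
    rw [real_inner_comm, ← ContinuousLinearMap.adjoint_inner_right, inner_sub_left]
  simpa only [hinner, sub_self] using (hweak v hv).sub_const (∫ x, ⟪uLim x, v x⟫ ∂μ)

end WeakL2

theorem stmt6_general {d r : ℕ} (T γ : ℝ) (hT : 0 < T)
    (h : ℝ → EuclideanSpace ℝ (Fin r) →L[ℝ] EuclideanSpace ℝ (Fin d))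
    (hh : ContinuousOn h (Set.Icc 0 T)) (M : ℝ) (hhb : ∀ t ∈ Set.Icc (0 : ℝ) T, ‖h t‖ ≤ M)
    (u : ℕ → ℝ → EuclideanSpace ℝ (Fin r)) (uLim : ℝ → EuclideanSpace ℝ (Fin r))
    (hun : ∀ n, MemLp (u n) 2 (volume.restrict (Set.Icc 0 T)))
    (huLim : MemLp uLim 2 (volume.restrict (Set.Icc 0 T)))
    (hbn : ∀ n, (∫ t in (0 : ℝ)..T, ‖u n t‖ ^ 2) ≤ 2 * γ)
    (hweak : ∀ v : ℝ → EuclideanSpace ℝ (Fin r),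
      MemLp v 2 (volume.restrict (Set.Icc 0 T)) →
      Tendsto (fun n => ∫ s in (0 : ℝ)..T, ⟪u n s, v s⟫) atTop
        (𝓝 (∫ s in (0 : ℝ)..T, ⟪uLim s, v s⟫))) :
    TendstoUniformlyOn (fun n t => ∫ s in (0 : ℝ)..t, h s (u n s - uLim s)) 0 atTop
      (Set.Icc 0 T) := by
  set K := Set.Icc (0 : ℝ) T
  have hK : ∀ g : ℝ → ℝ, ∫ s in (0 : ℝ)..T, g s = ∫ s in K, g s := fun g => by
    rw [integral_of_le hT.le, integral_Icc_eq_integral_Ioc]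
  have hbnK : ∀ n, ∫ s in K, ‖u n s‖ ^ 2 ≤ 2 * γ := fun n => hK _ ▸ hbn n
  obtain ⟨B, hB⟩ : ∃ B, ∀ n, ∫ s in K, ‖u n s - uLim s‖ ^ 2 ≤ B :=
    ⟨2 * (2 * γ) + 2 * ∫ s in K, ‖uLim s‖ ^ 2, fun n =>
      (integral_norm_sub_sq_le (hun n) huLim).trans (by gcongr; exact hbnK n)⟩
  have hweakK : TendstoWeaklyInL2 (volume.restrict K) u atTop uLim := fun v hv => by
    simpa only [hK] using hweak v hv
  refine isCompact_Icc.tendstoUniformlyOn_of_equicontinuousOn ?_ fun t ht => ?_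
  · refine Metric.equicontinuousOn_of_continuity_modulus (fun δ => M * √B * √δ) ?_ _
      fun x hx y hy n => dist_intervalIntegral_clm_apply_le hh hhb ((hun n).sub huLim) (hB n) hx hy
    simpa using tendsto_const_nhds.mul (Real.continuous_sqrt.tendsto 0)
  · have hsub : Set.Ioc 0 t ⊆ K := Set.Ioc_subset_Icc_self.trans (Set.Icc_subset_Icc_right ht.2)
    have hweakt := hweakK.restrict (s := Set.Ioc 0 t) measurableSet_Ioc
    rw [Measure.restrict_restrict_of_subset hsub] at hweakt
    simpa [integral_of_le ht.1] using hweakt.tendsto_integral_clm_apply_sub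
      (fun n => (hun n).mono_measure (Measure.restrict_mono hsub le_rfl))
      (huLim.mono_measure (Measure.restrict_mono hsub le_rfl))
      ((hh.mono hsub).aestronglyMeasurable measurableSet_Ioc)
      (ae_restrict_of_forall_mem measurableSet_Ioc fun s hs => hhb s (hsub hs))

/-- If `h` is continuous and bounded on `[0,T]` and `u_n ⇀ u` weakly in `L²` with
`‖u_n‖², ‖u‖² ≤ 2γ`, then `Γ_n(t) = ∫₀ᵗ h(s)(u_n(s) - u(s)) ds → 0` uniformly on `[0,T]`. -/
theorem stmt6 {d r : ℕ} (T γ : ℝ) (hT : 0 < T) (hγ : 0 < γ)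
    (h : ℝ → EuclideanSpace ℝ (Fin r) →L[ℝ] EuclideanSpace ℝ (Fin d))
    (hh : ContinuousOn h (Set.Icc 0 T)) (M : ℝ) (hhb : ∀ t ∈ Set.Icc (0 : ℝ) T, ‖h t‖ ≤ M)
    (u : ℕ → ℝ → EuclideanSpace ℝ (Fin r)) (uLim : ℝ → EuclideanSpace ℝ (Fin r))
    (hun : ∀ n, MemLp (u n) 2 (volume.restrict (Set.Icc 0 T)))
    (huLim : MemLp uLim 2 (volume.restrict (Set.Icc 0 T)))
    (hbn : ∀ n, (∫ t in (0 : ℝ)..T, ‖u n t‖ ^ 2) ≤ 2 * γ)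
    (hbLim : (∫ t in (0 : ℝ)..T, ‖uLim t‖ ^ 2) ≤ 2 * γ)
    (hweak : ∀ v : ℝ → EuclideanSpace ℝ (Fin r),
      MemLp v 2 (volume.restrict (Set.Icc 0 T)) →
      Tendsto (fun n => ∫ s in (0 : ℝ)..T, ⟪u n s, v s⟫) atTop
        (𝓝 (∫ s in (0 : ℝ)..T, ⟪uLim s, v s⟫))) :
    TendstoUniformlyOn (fun n t => ∫ s in (0 : ℝ)..t, h s (u n s - uLim s)) 0 atTop
      (Set.Icc 0 T) :=
  stmt6_general T γ hT h hh M hhb u uLim hun huLim hbn hweak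
end

section
/- Let F : ℝ^d → ℝ^d and G : ℝ^d → L(ℝ^r,ℝ^d) be Lipschitz with G bounded, and fix q ∈ ℝ^d and γ > 0. Let (u_n) ⊂ L²([0,T];ℝ^r) with ‖u_n‖²_{L²} ≤ 2γ converge weakly to u, and let g_n, g solve ġ_n = F(g_n) + G(g_n)u_n, g_n(0) = q, and ġ = F(g) + G(g)u, g(0) = q. Then g_n → g in C([0,T];ℝ^d). -/
/-!
Write `H n t = ∫₀ᵗ G (gLim s) (u n s) ds` and `H t` likewise with `uLim`. By AM-GM the `L²` bound
makes `∫ₛᵗ ‖u n‖` uniformly small on short intervals, so the `H n` are uniformly equicontinuous;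
testing the weak convergence against `s ↦ 1_{s ≤ t} • (G (gLim s))† e` gives `H n t → H t` for
each `t`, so `H n → H` uniformly by Ascoli. The Lipschitz bounds give
`‖g n t - gLim t‖ ≤ ‖H n - H‖_∞ + ∫₀ᵗ (LF + LG ‖u n‖) ‖g n - gLim‖`, and the weight has
integral `≤ 1/2` on every interval of a length `δ` independent of `n`; Grönwall on the
`⌈T/δ⌉` such steps, each of which at most doubles the integral term, yields
`‖g n - gLim‖_∞ ≤ 2 ^ ⌈T/δ⌉ ‖H n - H‖_∞`.
-/

open MeasureTheory intervalIntegral Filter Topology Set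
open scoped RealInnerProductSpace NNReal

theorem MeasureTheory.IntegrableOn.intervalIntegrable_of_mem_Icc {E : Type*}
    [NormedAddCommGroup E] {f : ℝ → E} {a b s t : ℝ} (hf : IntegrableOn f (Icc a b))
    (hs : s ∈ Icc a b) (ht : t ∈ Icc a b) : IntervalIntegrable f volume s t :=
  (hf.mono_set (uIcc_subset_Icc hs ht)).intervalIntegrable

theorem MeasureTheory.IntegrableOn.clm_apply_of_continuousOn {E F : Type*}
    [NormedAddCommGroup E] [NormedSpace ℝ E] [NormedAddCommGroup F] [NormedSpace ℝ F]
    {K : Set ℝ} (hK : IsCompact K) {A : ℝ → E →L[ℝ] F} {w : ℝ → E}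
    (hA : ContinuousOn A K) (hw : IntegrableOn w K) :
    IntegrableOn (fun s => A s (w s)) K := by
  obtain ⟨C, hC⟩ := hK.exists_bound_of_continuousOn hA
  refine (hw.norm.const_mul C).mono' ?_ ?_
  · exact isBoundedBilinearMap_apply.continuous.comp_aestronglyMeasurable
      ((hA.aestronglyMeasurable hK.measurableSet).prodMk hw.aestronglyMeasurable)
  · filter_upwards [ae_restrict_mem hK.measurableSet] with s hs
    exact (A s).le_of_opNorm_le (hC s hs) _

theorem exists_forall_integral_norm_le_of_integral_norm_sq_le {E : Type*}
    [NormedAddCommGroup E] {T C ε : ℝ} (hC : 0 ≤ C) (hε : 0 < ε) :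
    ∃ δ > 0, ∀ w : ℝ → E, MemLp w 2 (volume.restrict (Icc 0 T)) →
      ∫ x in 0..T, ‖w x‖ ^ 2 ≤ C → ∀ s ∈ Icc 0 T, ∀ t ∈ Icc 0 T, s ≤ t → t - s ≤ δ →
        ∫ x in s..t, ‖w x‖ ≤ ε := by
  set lam := C / ε + 1
  have hlam : 0 < lam := by positivity
  have hClam : C ≤ ε * lam := by simp only [lam, mul_add, mul_div_cancel₀ C hε.ne']; linarith
  refine ⟨ε / lam, by positivity, fun w hw hwC s hs t ht hst hδ => ?_⟩
  have hT : 0 ≤ T := hs.1.trans (hst.trans ht.2)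
  have hw1 : IntegrableOn (fun x => ‖w x‖) (Icc 0 T) := (hw.integrable one_le_two).norm
  have hw2 : IntegrableOn (fun x => ‖w x‖ ^ 2) (Icc 0 T) := hw.norm.integrable_sq
  have hsq : ∫ x in s..t, ‖w x‖ ^ 2 ≤ C :=
    (integral_mono_interval hs.1 hst ht.2 (ae_of_all _ fun _ => sq_nonneg _)
      (hw2.intervalIntegrable_of_mem_Icc (left_mem_Icc.2 hT) (right_mem_Icc.2 hT))).trans hwC
  have hamgm : ∫ x in s..t, ‖w x‖ ≤ ∫ x in s..t, (lam / 2 + ‖w x‖ ^ 2 / (2 * lam)) := by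
    refine integral_mono_on hst (hw1.intervalIntegrable_of_mem_Icc hs ht)
      (intervalIntegrable_const.add
        ((hw2.intervalIntegrable_of_mem_Icc hs ht).div_const _)) fun x _ => ?_
    have key : lam / 2 + ‖w x‖ ^ 2 / (2 * lam) - ‖w x‖ = (‖w x‖ - lam) ^ 2 / (2 * lam) := by
      field_simp; ring
    linarith [key ▸ (by positivity : 0 ≤ (‖w x‖ - lam) ^ 2 / (2 * lam))]
  rw [integral_add intervalIntegrable_const
    ((hw2.intervalIntegrable_of_mem_Icc hs ht).div_const _), intervalIntegral.integral_const,
    intervalIntegral.integral_div, smul_eq_mul] at hamgm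
  calc ∫ x in s..t, ‖w x‖ ≤ (t - s) * (lam / 2) + (∫ x in s..t, ‖w x‖ ^ 2) / (2 * lam) := hamgm
    _ ≤ ε / lam * (lam / 2) + ε * lam / (2 * lam) := by gcongr; exact hsq.trans hClam
    _ = ε := by field_simp; ring

theorem exists_forall_integral_const_add_mul_norm_le {E : Type*} [NormedAddCommGroup E]
    {T C c L ε : ℝ} (hc : 0 ≤ c) (hL : 0 ≤ L) (hC : 0 ≤ C) (hε : 0 < ε) :
    ∃ δ > 0, ∀ w : ℝ → E, MemLp w 2 (volume.restrict (Icc 0 T)) →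
      ∫ x in 0..T, ‖w x‖ ^ 2 ≤ C → ∀ s ∈ Icc 0 T, ∀ t ∈ Icc 0 T, s ≤ t → t - s ≤ δ →
        ∫ x in s..t, (c + L * ‖w x‖) ≤ ε := by
  obtain ⟨δ, hδ, hw⟩ := exists_forall_integral_norm_le_of_integral_norm_sq_le (E := E) (T := T)
    hC (show 0 < ε / (2 * (L + 1)) by positivity)
  refine ⟨min δ (ε / (2 * (c + 1))), by positivity, fun w hwL hwC s hs t ht hst hδst => ?_⟩
  have hw1 : IntervalIntegrable (fun x => ‖w x‖) volume s t :=
    IntegrableOn.intervalIntegrable_of_mem_Icc (hwL.integrable one_le_two).norm hs ht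
  rw [integral_add intervalIntegrable_const (hw1.const_mul L), intervalIntegral.integral_const,
    intervalIntegral.integral_const_mul, smul_eq_mul]
  calc (t - s) * c + L * ∫ x in s..t, ‖w x‖
      ≤ ε / (2 * (c + 1)) * c + L * (ε / (2 * (L + 1))) := by
        gcongr
        exacts [hδst.trans (min_le_right _ _),
          hw w hwL hwC s hs t ht hst (hδst.trans (min_le_left _ _))]
    _ ≤ ε / 2 + ε / 2 := by
        gcongr
        · rw [div_mul_eq_mul_div, div_le_div_iff₀ (by positivity) two_pos]; nlinarith
        · rw [mul_div_assoc', div_le_div_iff₀ (by positivity) two_pos]; nlinarith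
    _ = ε := add_halves ε

theorem uniformEquicontinuousOn_integral_clm_apply {ι E F : Type*} [NormedAddCommGroup E]
    [NormedSpace ℝ E] [NormedAddCommGroup F] [NormedSpace ℝ F] {T C : ℝ} (hC : 0 ≤ C)
    {A : ℝ → E →L[ℝ] F} (hA : ContinuousOn A (Icc 0 T)) {u : ι → ℝ → E}
    (hu : ∀ i, MemLp (u i) 2 (volume.restrict (Icc 0 T)))
    (hbd : ∀ i, ∫ s in 0..T, ‖u i s‖ ^ 2 ≤ C) :
    UniformEquicontinuousOn (fun i t => ∫ s in 0..t, A s (u i s)) (Icc 0 T) := by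
  obtain ⟨M, hM⟩ := isCompact_Icc.exists_bound_of_continuousOn hA
  set m := max M 1
  have hm : 0 < m := lt_max_of_lt_right one_pos
  have hu1 : ∀ i, IntegrableOn (u i) (Icc 0 T) := fun i => (hu i).integrable one_le_two
  have hAu : ∀ i, IntegrableOn (fun s => A s (u i s)) (Icc 0 T) := fun i =>
    (hu1 i).clm_apply_of_continuousOn isCompact_Icc hA
  rw [(Metric.uniformity_basis_dist.inf_principal _).uniformEquicontinuousOn_iff
    Metric.uniformity_basis_dist]
  intro ε hε
  obtain ⟨δ, hδ, hsmall⟩ := exists_forall_integral_norm_le_of_integral_norm_sq_le (E := E)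
    (T := T) hC (show 0 < ε / (2 * m) by positivity)
  have key : ∀ x ∈ Icc 0 T, ∀ y ∈ Icc 0 T, x ≤ y → y - x < δ → ∀ i,
      dist (∫ s in 0..x, A s (u i s)) (∫ s in 0..y, A s (u i s)) < ε := by
    intro x hx y hy hxy hyx i
    have h0 : (0 : ℝ) ∈ Icc 0 T := left_mem_Icc.2 (hx.1.trans (hxy.trans hy.2))
    rw [dist_comm, dist_eq_norm, integral_interval_sub_left
      ((hAu i).intervalIntegrable_of_mem_Icc h0 hy) ((hAu i).intervalIntegrable_of_mem_Icc h0 hx)]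
    calc ‖∫ s in x..y, A s (u i s)‖ ≤ ∫ s in x..y, m * ‖u i s‖ :=
          intervalIntegral.norm_integral_le_of_norm_le hxy (ae_of_all _ fun s hs =>
            (A s).le_of_opNorm_le ((hM s ⟨hx.1.trans hs.1.le, hs.2.trans hy.2⟩).trans
              (le_max_left _ _)) _)
            ((IntegrableOn.intervalIntegrable_of_mem_Icc (hu1 i).norm hx hy).const_mul m)
      _ = m * ∫ s in x..y, ‖u i s‖ := intervalIntegral.integral_const_mul _ _
      _ ≤ m * (ε / (2 * m)) := by
          gcongr; exact hsmall _ (hu i) (hbd i) x hx y hy hxy hyx.le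
      _ < ε := by field_simp; linarith
  refine ⟨δ, hδ, fun x y ⟨hxy, hx, hy⟩ i => ?_⟩
  obtain ⟨hxy, hyx⟩ := abs_sub_lt_iff.1 (by simpa only [mem_ofPred_eq, Real.dist_eq] using hxy)
  rcases le_total x y with h | h
  · exact key x hx y hy h hyx i
  · exact (dist_comm _ _).trans_lt (key y hy x hx h hxy i)

theorem EquicontinuousOn.tendstoUniformlyOn_of_tendsto {ι X α : Type*} [TopologicalSpace X]
    [UniformSpace α] {F : ι → X → α} {f : X → α} {K : Set X} {l : Filter ι}
    (hK : IsCompact K) (hF : EquicontinuousOn F K)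
    (h : ∀ x ∈ K, Tendsto (F · x) l (𝓝 (f x))) : TendstoUniformlyOn F f l K := by
  have := (EquicontinuousOn.tendsto_uniformOnFun_iff_pi' (𝔖 := {K}) (by simpa using hK)
    (by simpa using hF) l f).2 (by
      rw [sUnion_singleton, tendsto_pi_nhds]
      exact fun x => h x x.2)
  exact UniformOnFun.tendsto_iff_tendstoUniformlyOn.1 this K rfl

theorem tendsto_of_forall_tendsto_inner {ι F : Type*} [NormedAddCommGroup F]
    [InnerProductSpace ℝ F] [FiniteDimensional ℝ F] {l : Filter ι} {f : ι → F} {x : F}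
    (h : ∀ y, Tendsto (fun i => ⟪y, f i⟫) l (𝓝 ⟪y, x⟫)) : Tendsto f l (𝓝 x) := by
  set b := stdOrthonormalBasis ℝ F
  rw [← b.sum_repr' x, funext fun i => (b.sum_repr' (f i)).symm]
  exact tendsto_finsetSum _ fun j _ => (h (b j)).smul_const (b j)

section WeakConvergence

variable {E F : Type*} [NormedAddCommGroup E] [InnerProductSpace ℝ E] [CompleteSpace E]
  [NormedAddCommGroup F] [InnerProductSpace ℝ F] [CompleteSpace F]
  {T t : ℝ} {A : ℝ → E →L[ℝ] F}

theorem memLp_indicator_adjoint_apply (hA : ContinuousOn A (Icc 0 T)) (y : F) :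
    MemLp ((Iic t).indicator fun s => ContinuousLinearMap.adjoint (A s) y) 2
      (volume.restrict (Icc 0 T)) := by
  obtain ⟨C, hC⟩ := isCompact_Icc.exists_bound_of_continuousOn hA
  have hA' : ContinuousOn (fun s => ContinuousLinearMap.adjoint (A s) y) (Icc 0 T) :=
    (ContinuousLinearMap.adjoint.continuous.comp_continuousOn hA).clm_apply continuousOn_const
  refine MemLp.of_bound ((hA'.aestronglyMeasurable measurableSet_Icc).indicator
    measurableSet_Iic) (C * ‖y‖) ?_
  filter_upwards [ae_restrict_mem measurableSet_Icc] with s hs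
  refine (norm_indicator_le_norm_self _ _).trans ?_
  exact (ContinuousLinearMap.adjoint (A s)).le_of_opNorm_le
    ((LinearIsometryEquiv.norm_map _ _).trans_le (hC s hs)) y

theorem integral_inner_indicator_adjoint_apply (ht : t ∈ Icc 0 T) (hA : ContinuousOn A (Icc 0 T))
    {w : ℝ → E} (hw : IntegrableOn w (Icc 0 T)) (y : F) :
    ∫ s in 0..T, ⟪w s, (Iic t).indicator (fun s => ContinuousLinearMap.adjoint (A s) y) s⟫ =
      ⟪y, ∫ s in 0..t, A s (w s)⟫ := by
  have hAw : IntegrableOn (fun s => A s (w s)) (Ioc 0 t) :=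
    (hw.clm_apply_of_continuousOn isCompact_Icc hA).mono_set
      fun s hs => ⟨hs.1.le, hs.2.trans ht.2⟩
  have hpt : ∀ s, ⟪w s, (Iic t).indicator (fun s => ContinuousLinearMap.adjoint (A s) y) s⟫ =
      (Iic t).indicator (fun s => ⟪y, A s (w s)⟫) s := fun s => by
    by_cases hs : s ∈ Iic t
    · simp [indicator_of_mem hs, ContinuousLinearMap.adjoint_inner_right, real_inner_comm]
    · simp [indicator_of_notMem hs]
  calc _ = ∫ s in 0..T, (Iic t).indicator (fun s => ⟪y, A s (w s)⟫) s := by simp_rw [hpt]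
    _ = ∫ s in 0..t, ⟪y, A s (w s)⟫ := intervalIntegral.integral_indicator ht
    _ = ⟪y, ∫ s in 0..t, A s (w s)⟫ := by
      rw [integral_of_le ht.1, integral_of_le ht.1]; exact integral_inner hAw y

theorem tendsto_integral_clm_apply_of_weakly [FiniteDimensional ℝ F] {ι : Type*} {l : Filter ι}
    (ht : t ∈ Icc 0 T) (hA : ContinuousOn A (Icc 0 T)) {u : ι → ℝ → E} {v : ℝ → E}
    (hu : ∀ i, IntegrableOn (u i) (Icc 0 T)) (hv : IntegrableOn v (Icc 0 T))
    (hweak : ∀ w : ℝ → E, MemLp w 2 (volume.restrict (Icc 0 T)) →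
      Tendsto (fun i => ∫ s in 0..T, ⟪u i s, w s⟫) l (𝓝 (∫ s in 0..T, ⟪v s, w s⟫))) :
    Tendsto (fun i => ∫ s in 0..t, A s (u i s)) l (𝓝 (∫ s in 0..t, A s (v s))) := by
  refine tendsto_of_forall_tendsto_inner fun y => ?_
  simp_rw [← integral_inner_indicator_adjoint_apply ht hA (hu _) y,
    ← integral_inner_indicator_adjoint_apply ht hA hv y]
  exact hweak _ (memLp_indicator_adjoint_apply hA y)

end WeakConvergence

theorem norm_sub_le_norm_integral_sub_add_integral {V U : Type*} [NormedAddCommGroup V]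
    [NormedSpace ℝ V] [NormedAddCommGroup U] [NormedSpace ℝ U] {F : V → V}
    {G : V → U →L[ℝ] V} {LF LG : ℝ≥0} (hF : LipschitzWith LF F) (hG : LipschitzWith LG G)
    {T : ℝ} {q : V} {g₁ g₂ : ℝ → V} {u₁ u₂ : ℝ → U} (hg₁c : ContinuousOn g₁ (Icc 0 T))
    (hg₂c : ContinuousOn g₂ (Icc 0 T)) (hu₁ : IntegrableOn u₁ (Icc 0 T))
    (hu₂ : IntegrableOn u₂ (Icc 0 T))
    (hg₁ : ∀ t ∈ Icc 0 T, g₁ t = q + ∫ s in 0..t, (F (g₁ s) + G (g₁ s) (u₁ s)))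
    (hg₂ : ∀ t ∈ Icc 0 T, g₂ t = q + ∫ s in 0..t, (F (g₂ s) + G (g₂ s) (u₂ s)))
    {t : ℝ} (ht : t ∈ Icc 0 T) :
    ‖g₁ t - g₂ t‖ ≤ ‖(∫ s in 0..t, G (g₂ s) (u₁ s)) - ∫ s in 0..t, G (g₂ s) (u₂ s)‖ +
      ∫ s in 0..t, (LF + LG * ‖u₁ s‖) * ‖g₁ s - g₂ s‖ := by
  have h0 : (0 : ℝ) ∈ Icc 0 T := left_mem_Icc.2 (ht.1.trans ht.2)
  have hIcc : ∀ {f : ℝ → V}, IntegrableOn f (Icc 0 T) → IntervalIntegrable f volume 0 t :=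
    fun hf => hf.intervalIntegrable_of_mem_Icc h0 ht
  have hFg : ∀ {g : ℝ → V}, ContinuousOn g (Icc 0 T) → IntegrableOn (fun s => F (g s)) (Icc 0 T) :=
    fun hg => (hF.continuous.comp_continuousOn hg).integrableOn_Icc
  have hGgu : ∀ {g : ℝ → V} {u : ℝ → U}, ContinuousOn g (Icc 0 T) → IntegrableOn u (Icc 0 T) →
      IntegrableOn (fun s => G (g s) (u s)) (Icc 0 T) :=
    fun hg hu => hu.clm_apply_of_continuousOn isCompact_Icc (hG.continuous.comp_continuousOn hg)
  set P := fun s => F (g₁ s) - F (g₂ s) + (G (g₁ s) - G (g₂ s)) (u₁ s)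
  have hP : IntegrableOn P (Icc 0 T) :=
    ((hFg hg₁c).sub (hFg hg₂c)).add ((hGgu hg₁c hu₁).sub (hGgu hg₂c hu₁))
  have hPle : ∀ s, ‖P s‖ ≤ (LF + LG * ‖u₁ s‖) * ‖g₁ s - g₂ s‖ := fun s => calc
    ‖P s‖ ≤ ‖F (g₁ s) - F (g₂ s)‖ + ‖G (g₁ s) - G (g₂ s)‖ * ‖u₁ s‖ :=
      (norm_add_le _ _).trans (add_le_add le_rfl ((G (g₁ s) - G (g₂ s)).le_opNorm _))
    _ ≤ LF * ‖g₁ s - g₂ s‖ + LG * ‖g₁ s - g₂ s‖ * ‖u₁ s‖ := by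
      gcongr
      exacts [hF.norm_sub_le _ _, hG.norm_sub_le _ _]
    _ = (LF + LG * ‖u₁ s‖) * ‖g₁ s - g₂ s‖ := by ring
  have hsplit : g₁ t - g₂ t =
      ((∫ s in 0..t, G (g₂ s) (u₁ s)) - ∫ s in 0..t, G (g₂ s) (u₂ s)) + ∫ s in 0..t, P s := by
    have i₁ : IntervalIntegrable (fun s => F (g₁ s) + G (g₁ s) (u₁ s)) volume 0 t :=
      hIcc ((hFg hg₁c).add (hGgu hg₁c hu₁))
    have i₂ : IntervalIntegrable (fun s => F (g₂ s) + G (g₂ s) (u₂ s)) volume 0 t :=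
      hIcc ((hFg hg₂c).add (hGgu hg₂c hu₂))
    have j₁ : IntervalIntegrable (fun s => G (g₂ s) (u₁ s)) volume 0 t := hIcc (hGgu hg₂c hu₁)
    have j₂ : IntervalIntegrable (fun s => G (g₂ s) (u₂ s)) volume 0 t := hIcc (hGgu hg₂c hu₂)
    rw [hg₁ t ht, hg₂ t ht, add_sub_add_left_eq_sub, ← integral_sub i₁ i₂, ← integral_sub j₁ j₂,
      ← integral_add (j₁.sub j₂) (hIcc hP)]
    congr 1 with s
    simp only [P, sub_apply]
    abel
  rw [hsplit]
  refine (norm_add_le _ _).trans (add_le_add le_rfl ?_)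
  exact norm_integral_le_of_norm_le ht.1 (ae_of_all _ fun s _ => hPle s)
    ((((integrableOn_const measure_Icc_lt_top.ne).add (hu₁.norm.const_mul _)).mul_continuousOn
      (hg₁c.sub hg₂c).norm isCompact_Icc).intervalIntegrable_of_mem_Icc h0 ht)

section Gronwall

variable {T δ ε : ℝ} {a φ : ℝ → ℝ}

theorem integral_mul_le_two_mul_add_of_le_add_integral (ha : IntegrableOn a (Icc 0 T))
    (ha0 : ∀ s, 0 ≤ a s) (hφ0 : ∀ s, 0 ≤ φ s) (haφ : IntegrableOn (fun s => a s * φ s) (Icc 0 T))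
    (hφ : ∀ t ∈ Icc 0 T, φ t ≤ ε + ∫ s in 0..t, a s * φ s)
    {s t : ℝ} (hs : s ∈ Icc 0 T) (ht : t ∈ Icc 0 T) (hst : s ≤ t)
    (hhalf : ∫ x in s..t, a x ≤ 1 / 2) :
    ∫ y in 0..t, a y * φ y ≤ 2 * (∫ y in 0..s, a y * φ y) + ε := by
  have h0 : (0 : ℝ) ∈ Icc 0 T := left_mem_Icc.2 (hs.1.trans (hst.trans ht.2))
  have hsub : ∀ {x}, x ∈ Icc 0 T → (∫ y in 0..t, a y * φ y) - ∫ y in 0..x, a y * φ y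
      = ∫ y in x..t, a y * φ y := fun hx =>
    integral_interval_sub_left (haφ.intervalIntegrable_of_mem_Icc h0 ht)
      (haφ.intervalIntegrable_of_mem_Icc h0 hx)
  have hmono : ∀ x ∈ Icc s t, ∫ y in 0..x, a y * φ y ≤ ∫ y in 0..t, a y * φ y := fun x hx => by
    have := hsub ⟨hs.1.trans hx.1, hx.2.trans ht.2⟩
    have := intervalIntegral.integral_nonneg (μ := volume) hx.2 fun y _ =>
      mul_nonneg (ha0 y) (hφ0 y)
    linarith
  have hR : 0 ≤ ε + ∫ y in 0..t, a y * φ y := (hφ0 t).trans (hφ t ht)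
  have : ∫ y in s..t, a y * φ y ≤ (ε + ∫ y in 0..t, a y * φ y) / 2 := calc
    ∫ y in s..t, a y * φ y ≤ ∫ y in s..t, a y * (ε + ∫ y in 0..t, a y * φ y) :=
      integral_mono_on hst (haφ.intervalIntegrable_of_mem_Icc hs ht)
        ((ha.intervalIntegrable_of_mem_Icc hs ht).mul_const _) fun x hx =>
          mul_le_mul_of_nonneg_left ((hφ x ⟨hs.1.trans hx.1, hx.2.trans ht.2⟩).trans
            (by linarith [hmono x hx])) (ha0 x)
    _ = (∫ y in s..t, a y) * (ε + ∫ y in 0..t, a y * φ y) := intervalIntegral.integral_mul_const _ _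
    _ ≤ 1 / 2 * (ε + ∫ y in 0..t, a y * φ y) := mul_le_mul_of_nonneg_right hhalf hR
    _ = (ε + ∫ y in 0..t, a y * φ y) / 2 := by ring
  linarith [hsub hs]

theorem le_two_pow_mul_of_le_add_integral (hδ : 0 < δ) (ha : IntegrableOn a (Icc 0 T))
    (ha0 : ∀ s, 0 ≤ a s) (hφ0 : ∀ s, 0 ≤ φ s) (hφc : ContinuousOn φ (Icc 0 T))
    (ha_small : ∀ s ∈ Icc 0 T, ∀ t ∈ Icc 0 T, s ≤ t → t - s ≤ δ → ∫ x in s..t, a x ≤ 1 / 2)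
    (hφ : ∀ t ∈ Icc 0 T, φ t ≤ ε + ∫ s in 0..t, a s * φ s) :
    ∀ t ∈ Icc 0 T, φ t ≤ 2 ^ ⌈T / δ⌉₊ * ε := by
  have haφ : IntegrableOn (fun s => a s * φ s) (Icc 0 T) := ha.mul_continuousOn hφc isCompact_Icc
  have hstep : ∀ k : ℕ, ∀ t ∈ Icc 0 T, t ≤ k * δ → ∫ s in 0..t, a s * φ s ≤ (2 ^ k - 1) * ε := by
    intro k
    induction k with
    | zero =>
      intro t ht htk
      rw [le_antisymm (by simpa using htk) ht.1]
      simp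
    | succ k ih =>
      intro t ht htk
      set s := max (t - δ) 0
      have hs : s ∈ Icc 0 T := ⟨le_max_right _ _, max_le (by linarith [ht.2]) (ht.1.trans ht.2)⟩
      have hsk : s ≤ k * δ := max_le (by push_cast at htk; linarith) (by positivity)
      have := integral_mul_le_two_mul_add_of_le_add_integral ha ha0 hφ0 haφ hφ hs ht
        (max_le (by linarith) ht.1) (ha_small s hs t ht (max_le (by linarith) ht.1)
          (by linarith [le_max_left (t - δ) 0]))
      have := ih s hs hsk
      calc ∫ s in 0..t, a s * φ s ≤ 2 * ((2 ^ k - 1) * ε) + ε := by linarith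
        _ = (2 ^ (k + 1) - 1) * ε := by ring
  intro t ht
  have hT : T ≤ ⌈T / δ⌉₊ * δ := (div_le_iff₀ hδ).1 (Nat.le_ceil _)
  linarith [hφ t ht, hstep _ t ht (ht.2.trans hT)]

end Gronwall

theorem stmt10_general {d r : ℕ} (T γ : ℝ) (hγ : 0 < γ)
    (F : EuclideanSpace ℝ (Fin d) → EuclideanSpace ℝ (Fin d))
    (G : EuclideanSpace ℝ (Fin d) → EuclideanSpace ℝ (Fin r) →L[ℝ] EuclideanSpace ℝ (Fin d))
    (LF LG : NNReal) (hF : LipschitzWith LF F) (hG : LipschitzWith LG G)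
    (q : EuclideanSpace ℝ (Fin d))
    (u : ℕ → ℝ → EuclideanSpace ℝ (Fin r)) (uLim : ℝ → EuclideanSpace ℝ (Fin r))
    (hun : ∀ n, MemLp (u n) 2 (volume.restrict (Set.Icc 0 T)))
    (huLim : MemLp uLim 2 (volume.restrict (Set.Icc 0 T)))
    (hbn : ∀ n, (∫ t in (0 : ℝ)..T, ‖u n t‖ ^ 2) ≤ 2 * γ)
    (hweak : ∀ v : ℝ → EuclideanSpace ℝ (Fin r),
      MemLp v 2 (volume.restrict (Set.Icc 0 T)) →
      Tendsto (fun n => ∫ s in (0 : ℝ)..T, ⟪u n s, v s⟫) atTop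
        (𝓝 (∫ s in (0 : ℝ)..T, ⟪uLim s, v s⟫)))
    (g : ℕ → ℝ → EuclideanSpace ℝ (Fin d)) (gLim : ℝ → EuclideanSpace ℝ (Fin d))
    (hgc : ∀ n, ContinuousOn (g n) (Set.Icc 0 T))
    (hgLimc : ContinuousOn gLim (Set.Icc 0 T))
    (hg : ∀ n, ∀ t ∈ Set.Icc (0 : ℝ) T,
      g n t = q + ∫ s in (0 : ℝ)..t, (F (g n s) + G (g n s) (u n s)))
    (hgLim : ∀ t ∈ Set.Icc (0 : ℝ) T,
      gLim t = q + ∫ s in (0 : ℝ)..t, (F (gLim s) + G (gLim s) (uLim s))) :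
    TendstoUniformlyOn (fun n t => g n t) gLim atTop (Set.Icc 0 T) := by
  have hu : ∀ n, IntegrableOn (u n) (Icc 0 T) := fun n => (hun n).integrable one_le_two
  have huLim₁ : IntegrableOn uLim (Icc 0 T) := huLim.integrable one_le_two
  have hGgLim : ContinuousOn (fun s => G (gLim s)) (Icc 0 T) :=
    hG.continuous.comp_continuousOn hgLimc
  have hH : TendstoUniformlyOn (fun n t => ∫ s in 0..t, G (gLim s) (u n s))
      (fun t => ∫ s in 0..t, G (gLim s) (uLim s)) atTop (Icc 0 T) :=
    (uniformEquicontinuousOn_integral_clm_apply (by positivity) hGgLim hun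
      hbn).equicontinuousOn.tendstoUniformlyOn_of_tendsto isCompact_Icc fun t ht =>
        tendsto_integral_clm_apply_of_weakly ht hGgLim hu huLim₁ hweak
  obtain ⟨δ, hδ, hshort⟩ := exists_forall_integral_const_add_mul_norm_le
    (E := EuclideanSpace ℝ (Fin r)) (T := T) LF.2 LG.2 (by positivity : 0 ≤ 2 * γ) one_half_pos
  rw [Metric.tendstoUniformlyOn_iff]
  intro ε hε
  set N := ⌈T / δ⌉₊
  filter_upwards [Metric.tendstoUniformlyOn_iff.1 hH (ε / 2 ^ (N + 1)) (by positivity)]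
    with n hn t ht
  have hclose : ∀ s ∈ Icc 0 T, ‖g n s - gLim s‖ ≤
      ε / 2 ^ (N + 1) + ∫ x in 0..s, (LF + LG * ‖u n x‖) * ‖g n x - gLim x‖ := fun s hs =>
    (norm_sub_le_norm_integral_sub_add_integral hF hG (hgc n) hgLimc (hu n) huLim₁ (hg n) hgLim
      hs).trans (add_le_add (by rw [← dist_eq_norm, dist_comm]; exact (hn s hs).le) le_rfl)
  have hgronwall := le_two_pow_mul_of_le_add_integral (a := fun s => LF + LG * ‖u n s‖) hδ
    ((integrableOn_const measure_Icc_lt_top.ne).add ((hu n).norm.const_mul _))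
    (fun s => by positivity) (fun s => norm_nonneg _) ((hgc n).sub hgLimc).norm
    (hshort _ (hun n) (hbn n)) hclose t ht
  rw [dist_comm, dist_eq_norm]
  calc ‖g n t - gLim t‖ ≤ 2 ^ N * (ε / 2 ^ (N + 1)) := hgronwall
    _ = ε / 2 := by rw [pow_succ]; field_simp
    _ < ε := half_lt_self hε

/-- Continuity of the control-to-solution map from the weak topology of the `L²`-ball to
`C([0,T];ℝ^d)`: if `u_n ⇀ u` weakly in `L²` with `‖u_n‖² ≤ 2γ`, then the corresponding
controlled solutions converge uniformly, `g_n → g` in `C([0,T];ℝ^d)`. -/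
theorem stmt10 {d r : ℕ} (T γ : ℝ) (hT : 0 < T) (hγ : 0 < γ)
    (F : EuclideanSpace ℝ (Fin d) → EuclideanSpace ℝ (Fin d))
    (G : EuclideanSpace ℝ (Fin d) → EuclideanSpace ℝ (Fin r) →L[ℝ] EuclideanSpace ℝ (Fin d))
    (LF LG : NNReal) (hF : LipschitzWith LF F) (hG : LipschitzWith LG G)
    (M : ℝ) (hGb : ∀ x, ‖G x‖ ≤ M)
    (q : EuclideanSpace ℝ (Fin d))
    (u : ℕ → ℝ → EuclideanSpace ℝ (Fin r)) (uLim : ℝ → EuclideanSpace ℝ (Fin r))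
    (hun : ∀ n, MemLp (u n) 2 (volume.restrict (Set.Icc 0 T)))
    (huLim : MemLp uLim 2 (volume.restrict (Set.Icc 0 T)))
    (hbn : ∀ n, (∫ t in (0 : ℝ)..T, ‖u n t‖ ^ 2) ≤ 2 * γ)
    (hweak : ∀ v : ℝ → EuclideanSpace ℝ (Fin r),
      MemLp v 2 (volume.restrict (Set.Icc 0 T)) →
      Tendsto (fun n => ∫ s in (0 : ℝ)..T, ⟪u n s, v s⟫) atTop
        (𝓝 (∫ s in (0 : ℝ)..T, ⟪uLim s, v s⟫)))
    (g : ℕ → ℝ → EuclideanSpace ℝ (Fin d)) (gLim : ℝ → EuclideanSpace ℝ (Fin d))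
    (hgc : ∀ n, ContinuousOn (g n) (Set.Icc 0 T))
    (hgLimc : ContinuousOn gLim (Set.Icc 0 T))
    (hg : ∀ n, ∀ t ∈ Set.Icc (0 : ℝ) T,
      g n t = q + ∫ s in (0 : ℝ)..t, (F (g n s) + G (g n s) (u n s)))
    (hgLim : ∀ t ∈ Set.Icc (0 : ℝ) T,
      gLim t = q + ∫ s in (0 : ℝ)..t, (F (gLim s) + G (gLim s) (uLim s))) :
    TendstoUniformlyOn (fun n t => g n t) gLim atTop (Set.Icc 0 T) :=
  stmt10_general T γ hγ F G LF LG hF hG q u uLim hun huLim hbn hweak g gLim hgc hgLimc hg hgLim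
end
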